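/- arXiv:1007.0346 — 3 statements merged into one kernel-verified Lean document; each statement's English description precedes it below -/
import Mathlib

section
/- Let (G,τ) be a topological abelian group and φ: (G,τ) → (G,τ) a continuous endomorphism. Then for every positive integer k, ent*_τ(φ^k) = k · ent*_τ(φ). -/
open Filter Topology ENNReal

variable {G : Type*} [AddCommGroup G]

/-- `B_n(φ,N) = N ∩ φ⁻¹(N) ∩ … ∩ φ^{-(n-1)}(N)`. -/
noncomputable def Bsub (φ : AddMonoid.End G) (N : AddSubgroup G) (n : ℕ) : AddSubgroup G :=
  ⨅ i ∈ Finset.range n, N.comap (φ ^ i : AddMonoid.End G)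

/-- `H*(φ,N) = lim_n log|G/B_n(φ,N)|/n`. -/
noncomputable def Hstar (φ : AddMonoid.End G) (N : AddSubgroup G) : ℝ :=
  limUnder atTop fun n : ℕ => Real.log ((Bsub φ N n).index) / n

/-- The topological adjoint entropy: sup of `H*(φ,N)` over `τ`-open finite-index subgroups. -/
noncomputable def entStar (t : TopologicalSpace G) (φ : AddMonoid.End G) : ℝ≥0∞ :=
  ⨆ (N : AddSubgroup G) (_ : @IsOpen G t ↑N ∧ N.FiniteIndex), ENNReal.ofReal (Hstar φ N)

/-! Fekete's lemma applies because `n ↦ log [G : B_n(φ,N)]` is subadditive, so `H*(φ,N)` is a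
genuine limit. The identity `B_n(φ^k, B_k(φ,N)) = B_{nk}(φ,N)` then gives
`H*(φ^k, B_k(φ,N)) = k · H*(φ,N)` with `B_k(φ,N)` again open of finite index, hence
`ent*(φ^k) ≥ k · ent*(φ)`. Conversely `B_k(φ,N) ≤ N` and `H*(ψ, ·)` is antitone, so
`H*(φ^k,N) ≤ H*(φ^k, B_k(φ,N)) = k · H*(φ,N)`. -/

lemma AddSubgroup.finiteIndex_comap {A B : Type*} [AddGroup A] [AddGroup B] (N : AddSubgroup B)
    [N.FiniteIndex] (f : A →+ B) : (N.comap f).FiniteIndex :=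
  ⟨by
    rw [AddSubgroup.index_comap]
    exact AddSubgroup.isFiniteRelIndex_of_finiteIndex.relIndex_ne_zero⟩

lemma AddSubgroup.index_comap_le {A B : Type*} [AddGroup A] [AddGroup B] (N : AddSubgroup B)
    [N.FiniteIndex] (f : A →+ B) : (N.comap f).index ≤ N.index := by
  rw [AddSubgroup.index_comap, ← AddSubgroup.relIndex_top_right]
  exact AddSubgroup.relIndex_le_of_le_right le_top
    (by simpa using AddSubgroup.FiniteIndex.index_ne_zero)

lemma mem_Bsub {φ : AddMonoid.End G} {N : AddSubgroup G} {n : ℕ} {g : G} :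
    g ∈ Bsub φ N n ↔ ∀ i < n, φ^[i] g ∈ N := by
  simp only [Bsub, AddSubgroup.mem_iInf, Finset.mem_range]
  rfl

@[simp]
lemma Bsub_zero (φ : AddMonoid.End G) (N : AddSubgroup G) : Bsub φ N 0 = ⊤ := by
  simp [Bsub]

@[simp]
lemma Bsub_one (φ : AddMonoid.End G) (N : AddSubgroup G) : Bsub φ N 1 = N := by
  ext g; simp [mem_Bsub]

lemma Bsub_add (φ : AddMonoid.End G) (N : AddSubgroup G) (m n : ℕ) :
    Bsub φ N (m + n) = Bsub φ N m ⊓ (Bsub φ N n).comap (φ ^ m) := by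
  ext g
  change g ∈ Bsub φ N (m + n) ↔ g ∈ Bsub φ N m ∧ φ^[m] g ∈ Bsub φ N n
  simp only [mem_Bsub, ← Function.iterate_add_apply]
  constructor
  · exact fun h => ⟨fun i hi => h i (by omega), fun i hi => h (i + m) (by omega)⟩
  · rintro ⟨hm, hn⟩ i hi
    rcases lt_or_ge i m with him | hmi
    · exact hm i him
    · simpa [Nat.sub_add_cancel hmi] using hn (i - m) (by omega)

lemma Bsub_pow (φ : AddMonoid.End G) (N : AddSubgroup G) (k n : ℕ) :
    Bsub (φ ^ k) (Bsub φ N k) n = Bsub φ N (n * k) := by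
  induction n with
  | zero => simp
  | succ n ih => rw [Bsub_add, ih, Bsub_one, add_mul, one_mul, Bsub_add, ← pow_mul, mul_comm]

lemma Bsub_le_self (φ : AddMonoid.End G) (N : AddSubgroup G) {k : ℕ} (hk : 0 < k) :
    Bsub φ N k ≤ N := by
  obtain ⟨k, rfl⟩ := Nat.exists_eq_add_of_lt hk
  rw [zero_add, add_comm, Bsub_add, Bsub_one]
  exact inf_le_left

lemma Bsub_mono (φ : AddMonoid.End G) {M N : AddSubgroup G} (hMN : M ≤ N) (n : ℕ) :
    Bsub φ M n ≤ Bsub φ N n :=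
  iInf₂_mono fun _ _ => AddSubgroup.comap_mono hMN

instance (φ : AddMonoid.End G) (N : AddSubgroup G) [N.FiniteIndex] (n : ℕ) :
    (Bsub φ N n).FiniteIndex :=
  AddSubgroup.finiteIndex_iInf' _ fun _ _ => N.finiteIndex_comap _

lemma index_Bsub_add_le (φ : AddMonoid.End G) (N : AddSubgroup G) [N.FiniteIndex] (m n : ℕ) :
    (Bsub φ N (m + n)).index ≤ (Bsub φ N m).index * (Bsub φ N n).index := by
  rw [Bsub_add]
  exact AddSubgroup.index_inf_le.trans (Nat.mul_le_mul_left _ (AddSubgroup.index_comap_le _ _))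

lemma subadditive_log_index_Bsub (φ : AddMonoid.End G) (N : AddSubgroup G) [N.FiniteIndex] :
    Subadditive fun n => Real.log (Bsub φ N n).index := by
  intro m n
  have hpos (n : ℕ) : (0 : ℝ) < (Bsub φ N n).index := by
    exact_mod_cast Nat.pos_of_ne_zero AddSubgroup.FiniteIndex.index_ne_zero
  rw [← Real.log_mul (hpos m).ne' (hpos n).ne']
  exact Real.log_le_log (hpos _) (by exact_mod_cast index_Bsub_add_le φ N m n)

lemma tendsto_Hstar (φ : AddMonoid.End G) (N : AddSubgroup G) [N.FiniteIndex] :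
    Tendsto (fun n : ℕ => Real.log (Bsub φ N n).index / n) atTop (𝓝 (Hstar φ N)) := by
  have hbdd : BddBelow (Set.range fun n : ℕ => Real.log (Bsub φ N n).index / n) :=
    ⟨0, by rintro _ ⟨n, rfl⟩; exact div_nonneg (Real.log_natCast_nonneg _) n.cast_nonneg⟩
  have h := (subadditive_log_index_Bsub φ N).tendsto_lim hbdd
  rwa [Hstar, h.limUnder_eq]

lemma Hstar_le_of_le (φ : AddMonoid.End G) {M N : AddSubgroup G} [M.FiniteIndex] (hMN : M ≤ N) :
    Hstar φ N ≤ Hstar φ M := by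
  have := AddSubgroup.finiteIndex_of_le hMN
  refine le_of_tendsto_of_tendsto' (tendsto_Hstar φ N) (tendsto_Hstar φ M) fun n => ?_
  gcongr
  · exact_mod_cast Nat.pos_of_ne_zero AddSubgroup.FiniteIndex.index_ne_zero
  · exact Bsub_mono φ hMN n

lemma Hstar_pow (φ : AddMonoid.End G) (N : AddSubgroup G) [N.FiniteIndex] {k : ℕ} (hk : 0 < k) :
    Hstar (φ ^ k) (Bsub φ N k) = k * Hstar φ N := by
  have hmul : Tendsto (fun n : ℕ => n * k) atTop atTop := tendsto_id.atTop_mul_const' hk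
  have h := ((tendsto_Hstar φ N).comp hmul).const_mul (k : ℝ)
  rw [Hstar]
  refine (h.congr' ?_).limUnder_eq
  filter_upwards [eventually_ne_atTop 0] with n hn
  simp only [Function.comp_apply, Bsub_pow]
  push_cast
  field_simp

lemma isOpen_Bsub [TopologicalSpace G] {φ : AddMonoid.End G} (hφ : Continuous φ)
    {N : AddSubgroup G} (hN : IsOpen (N : Set G)) (n : ℕ) : IsOpen (Bsub φ N n : Set G) := by
  simp only [Bsub, AddSubgroup.coe_iInf]
  exact isOpen_biInter_finset fun i _ =>
    hN.preimage ((AddMonoid.End.coe_pow _ φ i).symm ▸ hφ.iterate i)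

lemma ofReal_Hstar_le_entStar [t : TopologicalSpace G] (φ : AddMonoid.End G) {N : AddSubgroup G}
    (hN : IsOpen (N : Set G)) [N.FiniteIndex] : ENNReal.ofReal (Hstar φ N) ≤ entStar t φ := by
  rw [entStar]
  exact le_iSup₂_of_le N ⟨hN, ‹_›⟩ le_rfl

theorem stmt4_general [TopologicalSpace G]
    (φ : AddMonoid.End G) (hφ : Continuous φ) (k : ℕ) (hk : 0 < k) :
    entStar ‹TopologicalSpace G› (φ ^ k) = (k : ℝ≥0∞) * entStar ‹TopologicalSpace G› φ := by
  have ofReal_mul_k (x : ℝ) : ENNReal.ofReal (k * x) = k * ENNReal.ofReal x := by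
    rw [ENNReal.ofReal_mul k.cast_nonneg, ENNReal.ofReal_natCast]
  apply le_antisymm
  · refine iSup₂_le fun N ⟨hNo, hNf⟩ => ?_
    calc ENNReal.ofReal (Hstar (φ ^ k) N)
        ≤ ENNReal.ofReal (Hstar (φ ^ k) (Bsub φ N k)) :=
          ENNReal.ofReal_le_ofReal (Hstar_le_of_le _ (Bsub_le_self φ N hk))
      _ = k * ENNReal.ofReal (Hstar φ N) := by rw [Hstar_pow φ N hk, ofReal_mul_k]
      _ ≤ k * entStar _ φ := by gcongr; exact ofReal_Hstar_le_entStar φ hNo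
  · simp only [entStar, ENNReal.mul_iSup]
    refine iSup₂_le fun N ⟨hNo, hNf⟩ => ?_
    rw [← ofReal_mul_k, ← Hstar_pow φ N hk]
    exact ofReal_Hstar_le_entStar _ (isOpen_Bsub hφ hNo k)

theorem stmt4 [TopologicalSpace G] [IsTopologicalAddGroup G]
    (φ : AddMonoid.End G) (hφ : Continuous φ) (k : ℕ) (hk : 0 < k) :
    entStar ‹TopologicalSpace G› (φ ^ k) = (k : ℝ≥0∞) * entStar ‹TopologicalSpace G› φ :=
  stmt4_general φ hφ k hk
end

section
/- Let (G,τ) be a topological abelian group and φ: (G,τ) → (G,τ) a continuous endomorphism. Let τ_q be the quotient topology on G/G¹_τ, where G¹_τ is the intersection of all τ-open finite-index subgroups of G, and let φ¹ be the induced endomorphism of G/G¹_τ. Then ent*_τ(φ) = ent*_{τ_q}(φ¹). -/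
/-! Pulling back along a surjective hom `f` that intertwines `φ` and `ψ` commutes with forming
`B_n` and preserves indices, so `H*(φ, f⁻¹ N) = H*(ψ, N)`. For the quotient map `G → G/G¹_τ`,
pulling back is a bijection between the open finite-index subgroups on both sides, because each
such subgroup of `G` contains `G¹_τ` and is therefore saturated. -/

open Filter Topology ENNReal

variable {G : Type*} [AddCommGroup G]

section Semiconj

variable {H : Type*} [AddCommGroup H] {f : G →+ H} {φ : AddMonoid.End G} {ψ : AddMonoid.End H}

theorem Bsub_comap (h : Function.Semiconj f φ ψ) (N : AddSubgroup H) (n : ℕ) :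
    Bsub φ (N.comap f) n = (Bsub ψ N n).comap f := by
  ext x
  simp only [Bsub, AddSubgroup.mem_comap, AddSubgroup.mem_iInf]
  refine forall₂_congr fun i _ => ?_
  change f ((φ ^ i) x) ∈ N ↔ (ψ ^ i) (f x) ∈ N
  rw [AddMonoid.End.coe_pow, AddMonoid.End.coe_pow, (h.iterate_right i).eq]

theorem Hstar_comap_of_surjective (hf : Function.Surjective f) (h : Function.Semiconj f φ ψ)
    (N : AddSubgroup H) : Hstar φ (N.comap f) = Hstar ψ N := by
  simp only [Hstar, Bsub_comap h, AddSubgroup.index_comap_of_surjective _ hf]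

end Semiconj

section Quotient

variable {H : Type*} [AddCommGroup H] [TopologicalSpace G] [TopologicalSpace H] {f : G →+ H}

theorem isOpen_comap_and_finiteIndex (hf : IsQuotientMap f) {N : AddSubgroup H}
    (hN : IsOpen (N : Set H) ∧ N.FiniteIndex) :
    IsOpen (N.comap f : Set G) ∧ (N.comap f).FiniteIndex := by
  refine ⟨hN.1.preimage hf.continuous, ⟨?_⟩⟩
  rw [AddSubgroup.index_comap_of_surjective _ hf.surjective]
  exact hN.2.index_ne_zero

theorem exists_isOpen_finiteIndex_comap_eq (hf : IsQuotientMap f) {N : AddSubgroup G}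
    (hN : IsOpen (N : Set G) ∧ N.FiniteIndex) (hker : f.ker ≤ N) :
    ∃ N' : AddSubgroup H, (IsOpen (N' : Set H) ∧ N'.FiniteIndex) ∧ N'.comap f = N := by
  have hN' : (N.map f).comap f = N := by rw [AddSubgroup.comap_map_eq, sup_eq_left.mpr hker]
  refine ⟨N.map f, ⟨?_, ⟨?_⟩⟩, hN'⟩
  · rw [← hf.isOpen_preimage, ← AddSubgroup.coe_comap, hN']
    exact hN.1
  · rw [← AddSubgroup.index_comap_of_surjective _ hf.surjective, hN']
    exact hN.2.index_ne_zero

theorem entStar_eq_of_isQuotientMap {φ : AddMonoid.End G} {ψ : AddMonoid.End H}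
    (hf : IsQuotientMap f) (h : Function.Semiconj f φ ψ)
    (hker : ∀ N : AddSubgroup G, IsOpen (N : Set G) ∧ N.FiniteIndex → f.ker ≤ N) :
    entStar ‹_› φ = entStar ‹_› ψ := by
  apply le_antisymm
  · refine iSup₂_le fun N hN => ?_
    obtain ⟨N', hN', rfl⟩ := exists_isOpen_finiteIndex_comap_eq hf hN (hker N hN)
    rw [Hstar_comap_of_surjective hf.surjective h]
    exact le_iSup₂_of_le N' hN' le_rfl
  · refine iSup₂_le fun N' hN' => ?_
    rw [← Hstar_comap_of_surjective hf.surjective h]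
    exact le_iSup₂_of_le (N'.comap f) (isOpen_comap_and_finiteIndex hf hN') le_rfl

end Quotient

theorem stmt15_general [TopologicalSpace G]
    (φ : AddMonoid.End G)
    (K : AddSubgroup G)
    (hK : K = ⨅ N ∈ {N : AddSubgroup G | IsOpen (N : Set G) ∧ N.FiniteIndex}, N)
    (hinv : K ≤ K.comap (φ : G →+ G)) :
    entStar ‹TopologicalSpace G› φ
      = entStar (inferInstance : TopologicalSpace (G ⧸ K))
          (QuotientAddGroup.map K K (φ : G →+ G) hinv) := by
  refine entStar_eq_of_isQuotientMap (f := QuotientAddGroup.mk' K)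
    (QuotientAddGroup.isQuotientMap_mk K) (fun x => rfl) fun N hN => ?_
  rw [QuotientAddGroup.ker_mk', hK]
  exact iInf₂_le N hN

theorem stmt15 [TopologicalSpace G] [IsTopologicalAddGroup G]
    (φ : AddMonoid.End G) (hφ : Continuous φ)
    (K : AddSubgroup G)
    (hK : K = ⨅ N ∈ {N : AddSubgroup G | IsOpen (N : Set G) ∧ N.FiniteIndex}, N)
    (hinv : K ≤ K.comap (φ : G →+ G)) :
    entStar ‹TopologicalSpace G› φ
      = entStar (inferInstance : TopologicalSpace (G ⧸ K))
          (QuotientAddGroup.map K K (φ : G →+ G) hinv) :=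
  stmt15_general φ K hK hinv
end

section
/- Let (G,τ) be a topological abelian group, φ: (G,τ) → (G,τ) a continuous endomorphism, and H a connected φ-invariant subgroup of G. Then ent*_{τ|_H}(φ|_H) = 0, and ent*_τ(φ) = ent*_{τ_q}(φ̄), where φ̄ is the induced endomorphism of G/H with the quotient topology. -/
/-!
Every open subgroup of a topological group is clopen, so it contains every connected subset
through `0`. Hence the only open subgroup of the connected group `H` is `H` itself, whose
trajectories `B_n` are trivial, and every open finite-index subgroup of `G` contains `H`. The
latter makes `N ↦ N / H` a bijection between the open finite-index subgroups of `G` and of `G ⧸ H`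
(with inverse the preimage) that preserves the indices of all `B_n`, since the quotient map
intertwines `φ` and `φ̄`.
-/

open Filter Topology ENNReal

variable {G : Type*} [AddCommGroup G]

section Entropy

variable {Q : Type*} [AddCommGroup Q]

lemma Bsub_top (φ : AddMonoid.End G) (n : ℕ) : Bsub φ ⊤ n = ⊤ := by
  simpa [Bsub] using fun i (_ : i < n) => AddSubgroup.comap_top (φ ^ i : G →+ G)

lemma Hstar_top (φ : AddMonoid.End G) : Hstar φ ⊤ = 0 := by
  simpa [Hstar, Bsub_top] using (tendsto_const_nhds (x := (0 : ℝ))).limUnder_eq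

lemma Bsub_comap_s16 {φ : AddMonoid.End G} {ψ : AddMonoid.End Q} {π : G →+ Q}
    (hπ : ∀ x, ψ (π x) = π (φ x)) (M : AddSubgroup Q) (n : ℕ) :
    Bsub φ (M.comap π) n = (Bsub ψ M n).comap π := by
  have hpow (i : ℕ) (x : G) : (ψ ^ i) (π x) = π ((φ ^ i) x) :=
    ((Function.Semiconj.iterate_right (fun x => (hπ x).symm) i) x).symm
  ext x
  simp only [Bsub, AddSubgroup.mem_comap, AddSubgroup.mem_iInf]
  exact forall₂_congr fun i _ => by
    change π ((φ ^ i) x) ∈ M ↔ (ψ ^ i) (π x) ∈ M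
    rw [hpow]

lemma Hstar_comap {φ : AddMonoid.End G} {ψ : AddMonoid.End Q} {π : G →+ Q}
    (hπ : ∀ x, ψ (π x) = π (φ x)) (hsurj : Function.Surjective π) (M : AddSubgroup Q) :
    Hstar φ (M.comap π) = Hstar ψ M := by
  simp only [Hstar, Bsub_comap_s16 hπ, AddSubgroup.index_comap_of_surjective _ hsurj]

lemma entStar_eq_zero_of_forall_isOpen_eq_top [TopologicalSpace G] (φ : AddMonoid.End G)
    (htop : ∀ N : AddSubgroup G, IsOpen (N : Set G) → N = ⊤) :
    entStar ‹TopologicalSpace G› φ = 0 := by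
  refine le_antisymm (iSup₂_le fun N hN => ?_) bot_le
  simp [htop N hN.1, Hstar_top]

lemma entStar_le_of_semiconj [TopologicalSpace G] [TopologicalSpace Q]
    {φ : AddMonoid.End G} {ψ : AddMonoid.End Q} {π : G →+ Q}
    (hπ : ∀ x, ψ (π x) = π (φ x)) (hcont : Continuous π) (hsurj : Function.Surjective π) :
    entStar ‹TopologicalSpace Q› ψ ≤ entStar ‹TopologicalSpace G› φ := by
  refine iSup₂_le fun M hM => ?_
  have hopen : IsOpen (M.comap π : Set G) := hM.1.preimage hcont
  have hfin : (M.comap π).FiniteIndex :=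
    ⟨by rw [AddSubgroup.index_comap_of_surjective _ hsurj]; exact hM.2.1⟩
  rw [← Hstar_comap hπ hsurj]
  exact le_iSup₂_of_le (M.comap π) ⟨hopen, hfin⟩ le_rfl

lemma le_entStar_of_semiconj [TopologicalSpace G] [TopologicalSpace Q]
    {φ : AddMonoid.End G} {ψ : AddMonoid.End Q} {π : G →+ Q}
    (hπ : ∀ x, ψ (π x) = π (φ x)) (hopen : IsOpenMap π) (hsurj : Function.Surjective π)
    (hker : ∀ N : AddSubgroup G, IsOpen (N : Set G) → π.ker ≤ N) :
    entStar ‹TopologicalSpace G› φ ≤ entStar ‹TopologicalSpace Q› ψ := by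
  refine iSup₂_le fun N hN => ?_
  have hcomap : (N.map π).comap π = N := by
    rw [AddSubgroup.comap_map_eq, sup_of_le_left (hker N hN.1)]
  have hfin : (N.map π).FiniteIndex :=
    ⟨by rw [← AddSubgroup.index_comap_of_surjective _ hsurj, hcomap]; exact hN.2.1⟩
  rw [← hcomap, Hstar_comap hπ hsurj]
  exact le_iSup₂_of_le (N.map π) ⟨hopen _ hN.1, hfin⟩ le_rfl

end Entropy

lemma AddSubgroup.subset_of_isPreconnected_of_isOpen [TopologicalSpace G]
    [SeparatelyContinuousAdd G] {S : Set G} (hS : IsPreconnected S) (h0 : (0 : G) ∈ S)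
    (N : AddSubgroup G) (hN : IsOpen (N : Set G)) : S ⊆ N :=
  hS.subset_isClopen ⟨N.isClosed_of_isOpen hN, hN⟩ ⟨0, h0, N.zero_mem⟩

theorem stmt16_general [TopologicalSpace G] [IsTopologicalAddGroup G]
    (φ : AddMonoid.End G)
    (H : AddSubgroup G) (hconn : IsConnected (H : Set G))
    (hinv : H ≤ H.comap (φ : G →+ G)) :
    entStar (inferInstance : TopologicalSpace H)
        (((φ : G →+ G).comp H.subtype).codRestrict H (fun x => hinv x.2)) = 0 ∧
    entStar ‹TopologicalSpace G› φ
      = entStar (inferInstance : TopologicalSpace (G ⧸ H))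
          (QuotientAddGroup.map H H (φ : G →+ G) hinv) := by
  have hH : ConnectedSpace H := isConnected_iff_connectedSpace.mp hconn
  have hπ : ∀ x, QuotientAddGroup.map H H (φ : G →+ G) hinv (QuotientAddGroup.mk' H x) =
      QuotientAddGroup.mk' H (φ x) := fun _ => rfl
  have hsurj := QuotientAddGroup.mk'_surjective H
  refine ⟨entStar_eq_zero_of_forall_isOpen_eq_top _ fun N hN => ?_,
    le_antisymm (le_entStar_of_semiconj hπ QuotientAddGroup.isOpenMap_coe hsurj ?_)
      (entStar_le_of_semiconj hπ continuous_quotient_mk' hsurj)⟩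
  · exact AddSubgroup.coe_eq_univ.mp <| Set.univ_subset_iff.mp <|
      N.subset_of_isPreconnected_of_isOpen isPreconnected_univ trivial hN
  · intro N hN
    rw [QuotientAddGroup.ker_mk']
    exact N.subset_of_isPreconnected_of_isOpen hconn.isPreconnected H.zero_mem hN

theorem stmt16 [TopologicalSpace G] [IsTopologicalAddGroup G]
    (φ : AddMonoid.End G) (hφ : Continuous φ)
    (H : AddSubgroup G) (hconn : IsConnected (H : Set G))
    (hinv : H ≤ H.comap (φ : G →+ G)) :
    entStar (inferInstance : TopologicalSpace H)
        (((φ : G →+ G).comp H.subtype).codRestrict H (fun x => hinv x.2)) = 0 ∧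
    entStar ‹TopologicalSpace G› φ
      = entStar (inferInstance : TopologicalSpace (G ⧸ H))
          (QuotientAddGroup.map H H (φ : G →+ G) hinv) :=
  stmt16_general φ H hconn hinv
end
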